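/- Let A be a commutative ring, B a smooth A-algebra with Ω^1_{B/A} free of rank one, b ∈ B, a ∈ A, and R_1 = B[T]/(b - aT). Then Ω^1_{R_1/A} is a free R_1-module of rank one. -/

import Mathlib

/-!
Write `t` for the class of `X` in `R₁ = B[X]/(b - aX)`. Since `Ω[B⁄A]` is spanned by `db`,
every `dc` with `c ∈ B` is a multiple of `db = d(a t) = a dt`, and `R₁` is generated by `t`
over `B`; hence `dt` spans `Ω[R₁⁄A]`. To see that `dt` is free, write `dc = ∂c · db`: the
derivation `a ∂ + d/dX` of `B[X]` kills `b - aX`, so it descends to a derivation of `R₁` with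
`t ↦ 1`, and the induced functional on `Ω[R₁⁄A]` takes the value `1` on `dt`.
-/

open Polynomial KaehlerDifferential

universe u

noncomputable def Module.Basis.ofSpanSingletonEqTop {R M : Type*} [Ring R] [AddCommGroup M]
    [Module R M] {m : M} (hm : Submodule.span R {m} = ⊤) (φ : M →ₗ[R] R) (hφ : φ m = 1) :
    Module.Basis (Fin 1) R M :=
  .mk (v := fun _ ↦ m)
    (.of_subsingleton' 0 fun r hr ↦ by simpa [hφ] using congr_arg φ hr)
    (by simp [Set.range_const, hm])

namespace Derivation

section Quotient

variable {R P : Type*} [CommRing R] [CommRing P] [Algebra R P] (D : Derivation R P P)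

theorem mapsTo_span_singleton {f : P} (hf : D f ∈ Ideal.span {f}) :
    Set.MapsTo D (Ideal.span {f}) (Ideal.span {f}) := by
  intro x hx
  obtain ⟨q, rfl⟩ := Ideal.mem_span_singleton'.1 hx
  rw [leibniz, smul_eq_mul, smul_eq_mul]
  exact add_mem (Ideal.mul_mem_left _ _ hf)
    (Ideal.mul_mem_right _ _ (Ideal.mem_span_singleton_self f))

noncomputable def liftQuotient {I : Ideal P} (hI : Set.MapsTo D I I) :
    Derivation R (P ⧸ I) (P ⧸ I) :=
  D.liftOfSurjective (f := Ideal.Quotient.mkₐ R I) (Ideal.Quotient.mkₐ_surjective R I)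
    fun _ hx ↦ Ideal.Quotient.eq_zero_iff_mem.2 (hI (Ideal.Quotient.eq_zero_iff_mem.1 hx))

@[simp]
theorem liftQuotient_mk {I : Ideal P} (hI : Set.MapsTo D I I) (x : P) :
    D.liftQuotient hI (Ideal.Quotient.mk I x) = Ideal.Quotient.mk I (D x) := by
  unfold liftQuotient
  exact liftOfSurjective_apply _ _ x

end Quotient

section Polynomial

variable {R S : Type*} [CommRing R] [CommRing S] [Algebra R S] (d : Derivation R S S)

noncomputable def extendToPolynomial (v : S[X]) : Derivation R S[X] S[X] :=
  PolynomialModule.equivPolynomialSelf.compDer d.mapCoeffs + v • derivative'.restrictScalars R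

@[simp]
theorem extendToPolynomial_C (v : S[X]) (c : S) : d.extendToPolynomial v (C c) = C (d c) := by
  simp [extendToPolynomial]

@[simp]
theorem extendToPolynomial_X (v : S[X]) : d.extendToPolynomial v X = v := by
  simp [extendToPolynomial]

end Polynomial

theorem map_mem_of_mem_adjoin {R B S M : Type*} [CommRing R] [CommRing B] [CommRing S]
    [Algebra R S] [Algebra B S] [AddCommGroup M] [Module S M] [Module R M]
    (D : Derivation R S M) (N : Submodule S M) {s : Set S}
    (hB : ∀ c, D (algebraMap B S c) ∈ N) (hs : ∀ x ∈ s, D x ∈ N) {y : S}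
    (hy : y ∈ Algebra.adjoin B s) : D y ∈ N := by
  induction hy using Algebra.adjoin_induction with
  | mem x hx => exact hs x hx
  | algebraMap c => exact hB c
  | add x y _ _ hx hy =>
    rw [map_add]
    exact add_mem hx hy
  | mul x y _ _ hx hy =>
    rw [leibniz]
    exact add_mem (N.smul_mem _ hy) (N.smul_mem _ hx)

end Derivation

theorem Ideal.Quotient.adjoin_mk_X_eq_top {R : Type*} [CommRing R] (I : Ideal R[X]) :
    Algebra.adjoin R {Ideal.Quotient.mk I X} = ⊤ := by
  rw [show Ideal.Quotient.mk I X = Ideal.Quotient.mkₐ R I X from rfl, ← Set.image_singleton,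
    ← AlgHom.map_adjoin, Polynomial.adjoin_X, Algebra.map_top, AlgHom.range_eq_top]
  exact Ideal.Quotient.mkₐ_surjective R I

theorem KaehlerDifferential.span_D_mk_X_eq_top (A : Type*) {B : Type*} [CommRing A]
    [CommRing B] [Algebra A B] {b : B} (hb : Submodule.span B {D A B b} = ⊤) (a : A) :
    Submodule.span (B[X] ⧸ Ideal.span {C b - C (algebraMap A B a) * X})
      {D A (B[X] ⧸ Ideal.span {C b - C (algebraMap A B a) * X}) (Ideal.Quotient.mk _ X)} =
      ⊤ := by
  set S := B[X] ⧸ Ideal.span {C b - C (algebraMap A B a) * X}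
  set t : S := Ideal.Quotient.mk _ X
  have hbt : algebraMap B S b = a • t := by
    rw [Algebra.smul_def a t]
    exact Ideal.Quotient.eq.2 (Ideal.subset_span rfl)
  have hB (c : B) : D A S (algebraMap B S c) ∈ Submodule.span S {D A S t} := by
    obtain ⟨c', hc'⟩ :=
      Submodule.mem_span_singleton.1 (hb.ge (Submodule.mem_top (x := D A B c)))
    rw [← map_D A A B S, ← hc', map_smul, map_D, hbt, Derivation.map_smul]
    exact Submodule.smul_of_tower_mem _ _
      (Submodule.smul_of_tower_mem _ _ (Submodule.mem_span_singleton_self _))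
  rw [eq_top_iff, ← span_range_derivation, Submodule.span_le]
  rintro _ ⟨s, rfl⟩
  refine (D A S).map_mem_of_mem_adjoin (B := B) (s := {t}) _ hB ?_ ?_
  · rintro _ rfl
    exact Submodule.mem_span_singleton_self _
  · rw [Ideal.Quotient.adjoin_mk_X_eq_top]
    exact Algebra.mem_top

theorem kaehler_free_rank_one_general
    (A B : Type u) [CommRing A] [CommRing B] [Algebra A B]
    (b : B) (a : A)
    (bas : Module.Basis (Fin 1) B (Ω[B⁄A])) (hbas : bas 0 = KaehlerDifferential.D A B b) :
    Nonempty (Module.Basis (Fin 1) (Polynomial B ⧸ Ideal.span {C b - C (algebraMap A B a) * X})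
      (Ω[(Polynomial B ⧸ Ideal.span {C b - C (algebraMap A B a) * X})⁄A])) := by
  let d : Derivation A B B := (bas.coord 0).compDer (D A B)
  have hdb : d b = 1 := by simp [d, ← hbas]
  let Δ := (algebraMap A B a • d).extendToPolynomial 1
  have hΔf : Δ (C b - C (algebraMap A B a) * X) = 0 := by
    simp [Δ, hdb, ← Algebra.algebraMap_eq_smul_one]
  let δ := Δ.liftQuotient (Δ.mapsTo_span_singleton (hΔf ▸ zero_mem _))
  have hb : Submodule.span B {D A B b} = ⊤ := by
    rw [← hbas, ← bas.span_eq, Set.range_unique]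
    rfl
  exact ⟨.ofSpanSingletonEqTop (span_D_mk_X_eq_top A hb a) δ.liftKaehlerDifferential
    (by simp [δ, Δ])⟩

/-- Let `A` be a commutative ring, `B` a smooth `A`-algebra with
`Ω¹_{B/A}` free of rank one on the basis `db` (`b ∈ B`), `a ∈ A`, and
`R₁ = B[T]/(b - aT)`. Then `Ω¹_{R₁/A}` is a free `R₁`-module of rank one. -/
theorem kaehler_free_rank_one
    (A B : Type u) [CommRing A] [CommRing B] [Algebra A B] [Algebra.Smooth A B]
    (b : B) (a : A)
    (bas : Module.Basis (Fin 1) B (Ω[B⁄A])) (hbas : bas 0 = KaehlerDifferential.D A B b) :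
    Nonempty (Module.Basis (Fin 1) (Polynomial B ⧸ Ideal.span {C b - C (algebraMap A B a) * X})
      (Ω[(Polynomial B ⧸ Ideal.span {C b - C (algebraMap A B a) * X})⁄A])) :=
  kaehler_free_rank_one_general A B b a bas hbas
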